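/- In a simply-laced irreducible root system, a positive root γ can be written as a sum of two positive roots in exactly ht(γ) − 1 ways; that is, #{ν ∈ Δ⁺ | γ − ν ∈ Δ⁺} = 2·ht(γ) − 2. -/

import Mathlib

open scoped RealInnerProductSpace

/-- Data of a crystallographic root system in a real inner product space `V`,
with simple roots indexed by a finite type `ι`. -/
structure RSD (ι V : Type*) [Fintype ι] [NormedAddCommGroup V]
    [InnerProductSpace ℝ V] where
  /-- The simple roots. -/
  sroot : ι → V
  /-- The set of roots. -/
  Δ : Set V
  finite : Δ.Finite
  zero_not_mem : (0 : V) ∉ Δ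
  sroot_mem : ∀ i, sroot i ∈ Δ
  sroot_indep : LinearIndependent ℝ sroot
  neg_mem : ∀ a ∈ Δ, -a ∈ Δ
  /-- Crystallographic condition. -/
  crys : ∀ a ∈ Δ, ∀ b ∈ Δ, ∃ n : ℤ, 2 * ⟪a, b⟫ / ⟪a, a⟫ = (n : ℝ)
  /-- The reflection associated with a vector (only specified on roots). -/
  reflect : V → (V ≃ₗ[ℝ] V)
  reflect_apply : ∀ a ∈ Δ, ∀ v : V,
    reflect a v = v - (2 * ⟪a, v⟫ / ⟪a, a⟫) • a
  reflect_root_mem : ∀ a ∈ Δ, ∀ b ∈ Δ, reflect a b ∈ Δ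
  /-- Every root is a nonnegative or nonpositive integral combination of simple roots. -/
  decomp : ∀ a ∈ Δ, (∃ c : ι → ℕ, a = ∑ i, (c i : ℝ) • sroot i) ∨
      (∃ c : ι → ℕ, a = -∑ i, (c i : ℝ) • sroot i)
  /-- Irreducibility. -/
  irred : ∀ S T : Set V, S ∪ T = Δ → (∀ a ∈ S, ∀ b ∈ T, ⟪a, b⟫ = 0) →
      S = ∅ ∨ T = ∅

namespace RSD

variable {ι V : Type*} [Fintype ι] [NormedAddCommGroup V] [InnerProductSpace ℝ V]
  (R : RSD ι V)

/-- The set of positive roots. -/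
def pos : Set V := {a ∈ R.Δ | ∃ c : ι → ℕ, a = ∑ i, (c i : ℝ) • R.sroot i}

/-- `R.le μ γ` means `μ ≼ γ`, i.e. `γ - μ` is a nonnegative integral combination
of simple roots. -/
def le (μ γ : V) : Prop := ∃ c : ι → ℕ, γ - μ = ∑ i, (c i : ℝ) • R.sroot i

/-- The Weyl group, generated by the simple reflections. -/
def W : Subgroup (V ≃ₗ[ℝ] V) :=
  Subgroup.closure (Set.range fun i => R.reflect (R.sroot i))

/-- The inversion set `N(w) = {γ ∈ Δ⁺ ∣ w γ ∈ -Δ⁺}`. -/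
def N (w : V ≃ₗ[ℝ] V) : Set V := {γ ∈ R.pos | -(w γ) ∈ R.pos}

/-- The length of `w`: minimal length of an expression of `w` as a product of
simple reflections. -/
noncomputable def len (w : V ≃ₗ[ℝ] V) : ℕ :=
  sInf {n | ∃ l : List ι, l.length = n ∧
    (l.map fun i => R.reflect (R.sroot i)).prod = w}

/-- The coroot `a∨ = 2a/(a,a)`. -/
@[nolint unusedArguments]
noncomputable def coroot (_R : RSD ι V) (a : V) : V := (2 / ⟪a, a⟫) • a

/-- `ρ`, the half-sum of the positive roots. -/
noncomputable def rho : V :=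
  (2⁻¹ : ℝ) • ∑ a ∈ (R.finite.subset (fun a ha => ha.1 : R.pos ⊆ R.Δ)).toFinset, a

/-- `R.HtIs γ n` : the height of `γ` is `n`. -/
def HtIs (γ : V) (n : ℕ) : Prop :=
  ∃ c : ι → ℕ, γ = ∑ i, (c i : ℝ) • R.sroot i ∧ ∑ i, c i = n

/-- A long root: a root of maximal squared length. -/
def IsLong (γ : V) : Prop := γ ∈ R.Δ ∧ ∀ b ∈ R.Δ, ⟪b, b⟫ ≤ ⟪γ, γ⟫

/-- The highest root. -/
def IsHighest (θ : V) : Prop := θ ∈ R.pos ∧ ∀ γ ∈ R.pos, R.le γ θ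

/-- Simply-laced: all roots have the same length. -/
def SimplyLaced : Prop := ∀ a ∈ R.Δ, ∀ b ∈ R.Δ, ⟪a, a⟫ = ⟪b, b⟫

/-- A minimal inversion complete set. -/
def IsMICS (F : Set (V ≃ₗ[ℝ] V)) : Prop :=
  (∀ w ∈ F, w ∈ R.W) ∧ (⋃ w ∈ F, R.N w) = R.pos ∧
    ∀ F' ⊂ F, (⋃ w ∈ F', R.N w) ≠ R.pos

end RSD

/-! Induct on the height. If `ht γ ≥ 2`, some simple root `α` pairs positively with `γ`,
and simply-lacedness forces `2 (γ, α) = (α, α)`, so `β = γ - α = s_α γ` is a positive root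
of height `ht γ - 1`. The simple reflection `s_α` permutes `Δ⁺ \ {α}`, hence maps the
decompositions of `γ` in which `α` is neither summand bijectively onto those of `β`.
For `γ` these omit exactly `ν ∈ {α, β}`; for `β` they omit nothing, since `β - α` would
have squared length `3 (α, α)`. -/
namespace RSD

variable {ι V : Type*} [Fintype ι] [NormedAddCommGroup V] [InnerProductSpace ℝ V]
  {R : RSD ι V} {a b x y γ ν : V} {m k n : ℕ}

lemma ne_zero_of_mem (ha : a ∈ R.Δ) : a ≠ 0 := fun h => R.zero_not_mem (h ▸ ha)

lemma inner_self_pos_of_mem (ha : a ∈ R.Δ) : 0 < ⟪a, a⟫ :=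
  real_inner_self_pos.mpr (ne_zero_of_mem ha)

lemma HtIs.unique (hm : R.HtIs x m) (hk : R.HtIs x k) : m = k := by
  obtain ⟨c, hc, rfl⟩ := hm
  obtain ⟨d, hd, rfl⟩ := hk
  have hcd : c = d := funext fun i => Nat.cast_injective
    (Fintype.linearIndependent_iffₛ.mp R.sroot_indep _ _ (hc.symm.trans hd) i)
  rw [hcd]

lemma HtIs.add (hx : R.HtIs x m) (hy : R.HtIs y k) : R.HtIs (x + y) (m + k) := by
  obtain ⟨c, rfl, rfl⟩ := hx
  obtain ⟨d, rfl, rfl⟩ := hy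
  exact ⟨c + d, by simp [add_smul, Finset.sum_add_distrib], Finset.sum_add_distrib⟩

lemma HtIs.ne_zero (h : R.HtIs x m) (hx : x ∈ R.Δ) : m ≠ 0 := by
  rintro rfl
  obtain ⟨c, rfl, hc⟩ := h
  refine ne_zero_of_mem hx (Finset.sum_eq_zero fun i hi => ?_)
  simp [Finset.sum_eq_zero_iff.mp hc i hi]

lemma htIs_sroot (i : ι) : R.HtIs (R.sroot i) 1 := by
  classical
  exact ⟨Pi.single i 1, by simp [Pi.single_apply], by simp⟩

lemma sroot_mem_pos (i : ι) : R.sroot i ∈ R.pos :=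
  let ⟨c, hc, _⟩ := htIs_sroot (R := R) i
  ⟨R.sroot_mem i, c, hc⟩

lemma exists_htIs_of_mem_pos (ha : a ∈ R.pos) : ∃ n, R.HtIs a n :=
  let ⟨c, hc⟩ := ha.2
  ⟨_, c, hc, rfl⟩

lemma two_le_of_htIs_add (hx : x ∈ R.pos) (hy : y ∈ R.pos) (h : R.HtIs (x + y) n) :
    2 ≤ n := by
  obtain ⟨m, hm⟩ := exists_htIs_of_mem_pos hx
  obtain ⟨k, hk⟩ := exists_htIs_of_mem_pos hy
  have := hm.ne_zero hx.1
  have := hk.ne_zero hy.1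
  have := (hm.add hk).unique h
  omega

lemma neg_notMem_pos (ha : a ∈ R.pos) : -a ∉ R.pos := fun hna =>
  absurd (two_le_of_htIs_add ha hna (⟨0, by simp, by simp⟩ : R.HtIs (a + -a) 0)) (by norm_num)

lemma mem_pos_or_neg_mem_pos (ha : a ∈ R.Δ) : a ∈ R.pos ∨ -a ∈ R.pos := by
  rcases R.decomp a ha with ⟨c, hc⟩ | ⟨c, hc⟩
  · exact .inl ⟨ha, c, hc⟩
  · exact .inr ⟨R.neg_mem a ha, c, by rw [hc, neg_neg]⟩

lemma reflect_reflect (ha : a ∈ R.Δ) (v : V) : R.reflect a (R.reflect a v) = v := by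
  have hL := (inner_self_pos_of_mem ha).ne'
  rw [R.reflect_apply a ha, R.reflect_apply a ha v, inner_sub_right, real_inner_smul_right]
  have hcoeff :
      2 * (⟪a, v⟫ - 2 * ⟪a, v⟫ / ⟪a, a⟫ * ⟪a, a⟫) / ⟪a, a⟫ = -(2 * ⟪a, v⟫ / ⟪a, a⟫) := by
    field_simp
    ring
  rw [hcoeff]
  module

lemma reflect_self (ha : a ∈ R.Δ) : R.reflect a a = -a := by
  rw [R.reflect_apply a ha, mul_div_assoc, div_self (inner_self_pos_of_mem ha).ne']
  module

lemma sub_mem_of_inner_pos (hsl : R.SimplyLaced) (ha : a ∈ R.Δ) (hb : b ∈ R.Δ) (hne : a ≠ b)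
    (hab : 0 < ⟪a, b⟫) : a - b ∈ R.Δ := by
  obtain ⟨m, hm⟩ := R.crys b hb a ha
  have hL := inner_self_pos_of_mem hb
  have hm' : 2 * ⟪a, b⟫ = m * ⟪b, b⟫ := by
    rw [← hm, real_inner_comm]
    field_simp
  have hnorm : ⟪a - b, a - b⟫ = (2 - m) * ⟪b, b⟫ := by
    rw [real_inner_sub_sub_self, hsl a ha b hb]
    linarith
  have hpos : 0 < ⟪a - b, a - b⟫ := real_inner_self_pos.mpr (sub_ne_zero.mpr hne)
  have hm1 : m = 1 := by
    have hm0 : 0 < m := by exact_mod_cast (by nlinarith : (0 : ℝ) < m)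
    have hm2 : m < 2 := by exact_mod_cast (by nlinarith : (m : ℝ) < 2)
    omega
  have hrefl := R.reflect_root_mem b hb a ha
  rwa [R.reflect_apply b hb, hm, hm1, Int.cast_one, one_smul] at hrefl

lemma two_inner_eq_of_sub_mem (hsl : R.SimplyLaced) (ha : a ∈ R.Δ) (hb : b ∈ R.Δ)
    (hab : a - b ∈ R.Δ) : 2 * ⟪a, b⟫ = ⟪b, b⟫ := by
  have h := hsl _ hab b hb
  rw [real_inner_sub_sub_self, hsl a ha b hb] at h
  linarith

lemma reflect_eq_sub_of_sub_mem (hsl : R.SimplyLaced) (ha : a ∈ R.Δ) (hb : b ∈ R.Δ)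
    (hba : b - a ∈ R.Δ) : R.reflect a b = b - a := by
  rw [R.reflect_apply a ha, real_inner_comm, two_inner_eq_of_sub_mem hsl hb ha hba,
    div_self (inner_self_pos_of_mem ha).ne', one_smul]

lemma eq_one_of_smul_mem (hsl : R.SimplyLaced) {c : ℝ} (ha : a ∈ R.Δ) (hc : 0 ≤ c)
    (hca : c • a ∈ R.Δ) : c = 1 := by
  have h := hsl _ hca a ha
  rw [real_inner_smul_left, real_inner_smul_right, ← mul_assoc] at h
  have hc2 : c * c = 1 :=
    mul_right_cancel₀ (inner_self_pos_of_mem ha).ne' (h.trans (one_mul _).symm)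
  nlinarith

lemma exists_eq_smul_sroot_of_add_eq_smul {t : ℝ} {i : ι} (hx : x ∈ R.pos) (hy : y ∈ R.pos)
    (h : x + y = t • R.sroot i) : ∃ c : ℕ, x = (c : ℝ) • R.sroot i := by
  classical
  obtain ⟨c, rfl⟩ := hx.2
  obtain ⟨d, rfl⟩ := hy.2
  have hcoeff := Fintype.linearIndependent_iffₛ.mp R.sroot_indep (fun j => (c j + d j : ℝ))
    (Pi.single i t) (by simpa [add_smul, Finset.sum_add_distrib, Pi.single_apply] using h)
  refine ⟨c i, Finset.sum_eq_single i (fun j _ hj => ?_) (by simp)⟩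
  have := hcoeff j
  simp only [Pi.single_apply, hj, if_false] at this
  have : (c j : ℝ) = 0 := by
    linarith [(c j).cast_nonneg (α := ℝ), (d j).cast_nonneg (α := ℝ)]
  simp [this]

lemma reflect_sroot_mem_pos (hsl : R.SimplyLaced) {i : ι} (hν : ν ∈ R.pos)
    (hne : ν ≠ R.sroot i) : R.reflect (R.sroot i) ν ∈ R.pos := by
  have hα := R.sroot_mem i
  refine (mem_pos_or_neg_mem_pos (R.reflect_root_mem _ hα ν hν.1)).resolve_right fun hneg => ?_
  have hsum : ν + -R.reflect (R.sroot i) ν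
      = (2 * ⟪R.sroot i, ν⟫ / ⟪R.sroot i, R.sroot i⟫) • R.sroot i := by
    rw [R.reflect_apply _ hα]
    abel
  obtain ⟨c, hc⟩ := exists_eq_smul_sroot_of_add_eq_smul hν hneg hsum
  refine hne ?_
  rw [hc, eq_one_of_smul_mem hsl hα c.cast_nonneg (hc ▸ hν.1), one_smul]

variable (R) in
def decomps (γ : V) : Set V := {ν ∈ R.pos | γ - ν ∈ R.pos}

lemma decomps_finite : (R.decomps γ).Finite := R.finite.subset fun _ hν => hν.1.1

lemma decomps_eq_empty (hγ : R.HtIs γ n) (hn : n < 2) : R.decomps γ = ∅ :=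
  Set.eq_empty_of_forall_notMem fun ν ⟨hν, hγν⟩ =>
    absurd (two_le_of_htIs_add hν hγν (by rwa [add_sub_cancel])) (by omega)

lemma reflect_mapsTo_decomps_diff (hsl : R.SimplyLaced) (i : ι) (x : V) :
    Set.MapsTo (R.reflect (R.sroot i)) (R.decomps x \ {R.sroot i, x - R.sroot i})
      (R.decomps (R.reflect (R.sroot i) x) \
        {R.sroot i, R.reflect (R.sroot i) x - R.sroot i}) := by
  set α := R.sroot i
  have hα : α ∈ R.pos := sroot_mem_pos i
  have hsα : ∀ v, R.reflect α v = α → v = -α := fun v hv => by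
    rw [← reflect_reflect (R.sroot_mem i) v, hv, reflect_self (R.sroot_mem i)]
  rintro ν ⟨⟨hν, hxν⟩, hναβ⟩
  simp only [Set.mem_insert_iff, Set.mem_singleton_iff, not_or] at hναβ
  obtain ⟨hνα, hνβ⟩ := hναβ
  have hxνα : x - ν ≠ α := fun h => hνβ (by rw [← h, sub_sub_cancel])
  refine ⟨⟨reflect_sroot_mem_pos hsl hν hνα, ?_⟩, ?_⟩
  · rw [← map_sub]
    exact reflect_sroot_mem_pos hsl hxν hxνα
  simp only [Set.mem_insert_iff, Set.mem_singleton_iff, not_or]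
  refine ⟨fun h => neg_notMem_pos hα (hsα ν h ▸ hν), fun h => ?_⟩
  rw [eq_sub_iff_add_eq, ← eq_sub_iff_add_eq', ← map_sub] at h
  exact neg_notMem_pos hα (hsα _ h.symm ▸ hxν)

lemma ncard_decomps_diff_reflect (hsl : R.SimplyLaced) (i : ι) (x : V) :
    (R.decomps x \ {R.sroot i, x - R.sroot i}).ncard =
      (R.decomps (R.reflect (R.sroot i) x) \
        {R.sroot i, R.reflect (R.sroot i) x - R.sroot i}).ncard := by
  have hinv := reflect_reflect (R.sroot_mem i)
  have hback := reflect_mapsTo_decomps_diff hsl i (R.reflect (R.sroot i) x)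
  rw [hinv] at hback
  exact (Set.InvOn.bijOn ⟨fun v _ => hinv v, fun v _ => hinv v⟩
    (reflect_mapsTo_decomps_diff hsl i x) hback).ncard_eq

lemma ncard_decomps_eq_ncard_decomps_sub_add_two (hsl : R.SimplyLaced) {i : ι} (hγ : γ ∈ R.Δ)
    (hβ : γ - R.sroot i ∈ R.pos) :
    (R.decomps γ).ncard = (R.decomps (γ - R.sroot i)).ncard + 2 := by
  set α := R.sroot i
  set β := γ - α
  have hαΔ : α ∈ R.Δ := R.sroot_mem i
  have hreflγ : R.reflect α γ = β := reflect_eq_sub_of_sub_mem hsl hαΔ hγ hβ.1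
  have hαβ : α ≠ β := fun h => by
    have h2α : (2 : ℝ) • α ∈ R.Δ := by
      rw [two_smul]
      nth_rewrite 2 [h]
      rwa [add_sub_cancel]
    have h21 := eq_one_of_smul_mem hsl hαΔ zero_le_two h2α
    norm_num at h21
  have hβα : β - α ∉ R.Δ := fun h => by
    have hγα := two_inner_eq_of_sub_mem hsl hγ hαΔ hβ.1
    have hβα := two_inner_eq_of_sub_mem hsl hβ.1 hαΔ h
    rw [inner_sub_left] at hβα
    linarith [inner_self_pos_of_mem hαΔ]
  have hpair : {α, β} ⊆ R.decomps γ := by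
    rintro ν (rfl | rfl)
    · exact ⟨sroot_mem_pos i, hβ⟩
    · exact ⟨hβ, by rw [sub_sub_cancel]; exact sroot_mem_pos i⟩
  have hβdecomps : R.decomps β \ {α, β - α} = R.decomps β := by
    refine sdiff_eq_left.mpr (Set.disjoint_left.mpr ?_)
    rintro ν ⟨hν, hβν⟩ (rfl | rfl)
    · exact hβα hβν.1
    · exact hβα hν.1
  calc (R.decomps γ).ncard = (R.decomps γ \ {α, β}).ncard + 2 := by
        rw [← Set.ncard_pair hαβ, Set.ncard_sdiff_add_ncard_of_subset hpair decomps_finite]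
    _ = (R.decomps β \ {α, β - α}).ncard + 2 := by
        rw [ncard_decomps_diff_reflect hsl i γ, hreflγ]
    _ = (R.decomps β).ncard + 2 := by rw [hβdecomps]

lemma exists_inner_sroot_pos (hγ : γ ∈ R.pos) : ∃ i, 0 < ⟪γ, R.sroot i⟫ := by
  by_contra! h
  obtain ⟨c, hc⟩ := hγ.2
  have hγγ : ⟪γ, γ⟫ ≤ 0 := by
    nth_rewrite 2 [hc]
    rw [inner_sum]
    refine Finset.sum_nonpos fun i _ => ?_
    rw [real_inner_smul_right]
    exact mul_nonpos_of_nonneg_of_nonpos (Nat.cast_nonneg _) (h i)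
  linarith [inner_self_pos_of_mem hγ.1]

lemma sub_sroot_mem_pos (hsl : R.SimplyLaced) {i : ι} (hγ : γ ∈ R.pos) (hn : R.HtIs γ n)
    (h2 : 2 ≤ n) (hi : 0 < ⟪γ, R.sroot i⟫) : γ - R.sroot i ∈ R.pos := by
  have hne : γ ≠ R.sroot i := by
    rintro rfl
    have := hn.unique (htIs_sroot i)
    omega
  have hsub := sub_mem_of_inner_pos hsl hγ.1 (R.sroot_mem i) hne hi
  refine (mem_pos_or_neg_mem_pos hsub).resolve_right fun hneg => ?_
  have := two_le_of_htIs_add hγ hneg (by simpa using htIs_sroot (R := R) i)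
  omega

end RSD

/-- In a simply-laced root system a positive root `γ` can be written
as a sum of two positive roots in exactly `ht(γ) - 1` ways:
`#{ν ∈ Δ⁺ ∣ γ - ν ∈ Δ⁺} = 2 ht(γ) - 2`. -/
theorem card_decompositions_eq
    {ι V : Type*} [Fintype ι] [NormedAddCommGroup V] [InnerProductSpace ℝ V]
    (R : RSD ι V) (hsl : R.SimplyLaced) (γ : V) (hγ : γ ∈ R.pos)
    (n : ℕ) (hht : R.HtIs γ n) :
    {ν ∈ R.pos | γ - ν ∈ R.pos}.ncard = 2 * n - 2 := by
  induction n using Nat.strong_induction_on generalizing γ with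
  | _ n ih =>
  change (R.decomps γ).ncard = 2 * n - 2
  rcases lt_or_ge n 2 with hn | hn
  · rw [RSD.decomps_eq_empty hht hn, Set.ncard_empty]
    omega
  obtain ⟨i, hi⟩ := RSD.exists_inner_sroot_pos hγ
  have hβ := RSD.sub_sroot_mem_pos hsl hγ hht hn hi
  obtain ⟨m, hm⟩ := RSD.exists_htIs_of_mem_pos hβ
  have hnm : n = m + 1 := hht.unique (by simpa using hm.add (RSD.htIs_sroot i))
  have hβcard : (R.decomps _).ncard = 2 * m - 2 := ih m (by omega) _ hβ hm
  rw [RSD.ncard_decomps_eq_ncard_decomps_sub_add_two hsl hγ.1 hβ, hβcard]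
  omega
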